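/- Let d ≥ 1 be an integer, θ > 0, and let N(d,θ) > 0 be the constant such that x ↦ N(d,θ)·exp(−‖x‖^θ) is a probability density on ℝ^d with respect to Lebesgue measure; let μ_θ be the corresponding probability measure. Let (Ω, F, P) be a probability space and (ω_q)_{q ∈ ℤ^d} a family of ℝ^d-valued random variables each having law μ_θ. Then there exist C > 0 and r₁ > 0 such that for every r ≥ r₁ and every nonempty set A ⊆ ℝ^d with diam(A) < r, P(there exists q ∈ ℤ^d with dist(q, A) ≥ r/2 and dist(q + ω_q, A) ≤ r/4) ≤ C·r^{2d}·exp(−(r/8)^θ). Here ‖·‖ is the Euclidean norm and dist the Euclidean distance. -/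

import Mathlib

/-!
A lattice point `q` at distance `≥ r/2` from `A` lands within `r/4` of `A` only if its
perturbation has length at least `s_q = max (r/4) (dist(q, A) - r/4)` (`minShift`). A Chernoff
bound for the density `N·exp(−‖x‖^θ)` gives `μ{‖x‖ ≥ s} ≲ exp(−(s/2)^θ)`, so a union bound over `q`
leaves the lattice sum of `exp(−(s_q/2)^θ)`. Fix a lattice point `m` within `r/4` of `A`. The
`O(r^d)` points of the box of radius `2r` around `m` contribute at most `exp(−(r/8)^θ)` each; a
point `q` outside it has `s_q ≥ ‖q - m‖/4`, so its term is at most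
`exp(−(r/8)^θ)·exp(−δ‖q - m‖^θ)` with `δ = 8^(-θ) - 16^(-θ) > 0`, which is summable over `ℤ^d`.
-/

open MeasureTheory

/-- The point of `ℝ^d` (with the Euclidean norm) corresponding to a lattice point `q ∈ ℤ^d`. -/
def latticePt (d : ℕ) (q : Fin d → ℤ) : EuclideanSpace ℝ (Fin d) :=
  WithLp.toLp 2 (fun i => (q i : ℝ))

open Filter Metric
open scoped ENNReal

noncomputable def minShift {E : Type*} [PseudoMetricSpace E] (A : Set E) (r : ℝ) (x : E) : ℝ :=
  max (r / 4) (infDist x A - r / 4)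

theorem div_four_le_minShift {E : Type*} [PseudoMetricSpace E] (A : Set E) (r : ℝ) (x : E) :
    r / 4 ≤ minShift A r x :=
  le_max_left _ _

theorem minShift_le_norm {E : Type*} [SeminormedAddCommGroup E] {A : Set E} {x v : E} {r : ℝ}
    (hx : r / 2 ≤ infDist x A) (hxv : infDist (x + v) A ≤ r / 4) :
    minShift A r x ≤ ‖v‖ := by
  have := infDist_le_infDist_add_dist (x := x) (y := x + v) (s := A)
  rw [dist_self_add_right] at this
  exact max_le (by linarith) (by linarith)

/-- `z` is at distance `≥ ‖z - m‖ - 5r/4` from `A`, and `‖z - m‖ - 3r/2 ≥ ‖z - m‖/4`. -/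
theorem div_four_le_minShift_of_two_mul_le {E : Type*} [SeminormedAddCommGroup E] {A : Set E}
    {a z m : E} {r : ℝ} (hA : Bornology.IsBounded A) (ha : a ∈ A) (hdiam : diam A ≤ r)
    (ham : ‖a - m‖ ≤ r / 4) (hfar : 2 * r ≤ ‖z - m‖) :
    ‖z - m‖ / 4 ≤ minShift A r z := by
  refine le_max_of_le_right ?_
  have hza := dist_le_infDist_add_diam (x := z) hA ha
  have hzm := norm_sub_le_norm_sub_add_norm_sub z a m
  rw [dist_eq_norm] at hza
  linarith

theorem measure_iUnion_preimage_le_tsum {ι Ω E : Type*} [Countable ι] [MeasurableSpace Ω]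
    [MeasurableSpace E] (P : Measure Ω) {μ : Measure E} {W : ι → Ω → E}
    (hW : ∀ i, Measurable (W i)) (hlaw : ∀ i, P.map (W i) = μ) {B : ι → Set E}
    (hB : ∀ i, MeasurableSet (B i)) :
    P (⋃ i, W i ⁻¹' B i) ≤ ∑' i, μ (B i) :=
  (measure_iUnion_le _).trans_eq <| tsum_congr fun i => by
    rw [← hlaw i, Measure.map_apply (hW i) (hB i)]

section Chernoff

variable {E : Type*} [NormedAddCommGroup E] [NormedSpace ℝ E] [FiniteDimensional ℝ E]
  [MeasurableSpace E] [BorelSpace E] (ν : Measure E) [ν.IsAddHaarMeasure]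

theorem lintegral_comp_inv_smul_of_pos (f : E → ℝ≥0∞) {t : ℝ} (ht : 0 < t) :
    ∫⁻ x, f (t⁻¹ • x) ∂ν = ENNReal.ofReal (t ^ Module.finrank ℝ E) * ∫⁻ x, f x ∂ν := by
  have h := lintegral_map_equiv f (MeasurableEquiv.smul₀ t⁻¹ (inv_ne_zero ht.ne')) (μ := ν)
  rw [MeasurableEquiv.coe_smul₀, Measure.map_addHaar_smul ν (inv_ne_zero ht.ne'),
    lintegral_smul_measure, inv_pow, inv_inv, abs_of_pos (pow_pos ht _)] at h
  exact h.symm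

/-- Chernoff bound: for `‖x‖ ≥ s` the density is at most `exp(−c s^θ)` times the density
rescaled by `t = (1 - c)^(-1/θ)`, whose total mass is `t^dim`. -/
theorem withDensity_exp_neg_rpow_norm_ge_le {N θ c s : ℝ} (hθ : 0 < θ) (hc₀ : 0 < c)
    (hc₁ : c < 1) (hs : 0 ≤ s)
    [IsProbabilityMeasure (ν.withDensity fun x => ENNReal.ofReal (N * Real.exp (-‖x‖ ^ θ)))] :
    ν.withDensity (fun x => ENNReal.ofReal (N * Real.exp (-‖x‖ ^ θ))) {x | s ≤ ‖x‖} ≤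
      ENNReal.ofReal (((1 - c) ^ (-θ⁻¹)) ^ Module.finrank ℝ E * Real.exp (-(c * s ^ θ))) := by
  set ρ : E → ℝ≥0∞ := fun x => ENNReal.ofReal (N * Real.exp (-‖x‖ ^ θ))
  set t := (1 - c) ^ (-θ⁻¹)
  have ht : 0 < t := Real.rpow_pos_of_pos (by linarith) _
  have hρ : ∫⁻ x, ρ x ∂ν = 1 := by
    rw [← setLIntegral_univ, ← withDensity_apply _ MeasurableSet.univ, measure_univ]
  have hscale : ∀ x : E, ‖t⁻¹ • x‖ ^ θ = (1 - c) * ‖x‖ ^ θ := fun x => by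
    rw [norm_smul, Real.norm_of_nonneg (inv_nonneg.2 ht.le),
      Real.mul_rpow (inv_nonneg.2 ht.le) (norm_nonneg x), Real.inv_rpow ht.le,
      ← Real.rpow_mul (by linarith), neg_mul, inv_mul_cancel₀ hθ.ne', Real.rpow_neg_one, inv_inv]
  have hpt : ∀ x ∈ {x : E | s ≤ ‖x‖},
      ρ x ≤ ENNReal.ofReal (Real.exp (-(c * s ^ θ))) * ρ (t⁻¹ • x) := fun x hx => by
    simp only [ρ, hscale, ENNReal.ofReal_mul' (Real.exp_nonneg _)]
    rw [mul_left_comm, ← ENNReal.ofReal_mul (Real.exp_nonneg _), ← Real.exp_add]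
    gcongr
    have : s ^ θ ≤ ‖x‖ ^ θ := Real.rpow_le_rpow hs hx hθ.le
    nlinarith
  have hmeas : MeasurableSet {x : E | s ≤ ‖x‖} :=
    (isClosed_le continuous_const continuous_norm).measurableSet
  calc ν.withDensity ρ {x | s ≤ ‖x‖}
      = ∫⁻ x in {x | s ≤ ‖x‖}, ρ x ∂ν := withDensity_apply _ hmeas
    _ ≤ ∫⁻ x in {x | s ≤ ‖x‖}, ENNReal.ofReal (Real.exp (-(c * s ^ θ))) * ρ (t⁻¹ • x) ∂ν :=
        setLIntegral_mono' hmeas hpt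
    _ ≤ ∫⁻ x, ENNReal.ofReal (Real.exp (-(c * s ^ θ))) * ρ (t⁻¹ • x) ∂ν :=
        setLIntegral_le_lintegral _ _
    _ = _ := by
        rw [lintegral_const_mul' _ _ ENNReal.ofReal_ne_top, lintegral_comp_inv_smul_of_pos ν ρ ht,
          hρ, mul_one, ← ENNReal.ofReal_mul (Real.exp_nonneg _), mul_comm]

theorem measure_exists_infDist_add_le {ι Ω : Type*} [Countable ι] [MeasurableSpace Ω]
    (P : Measure Ω) {N θ : ℝ} (hθ : 0 < θ)
    [IsProbabilityMeasure (ν.withDensity fun x => ENNReal.ofReal (N * Real.exp (-‖x‖ ^ θ)))]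
    {W : ι → Ω → E} (hW : ∀ i, Measurable (W i))
    (hlaw : ∀ i, P.map (W i) = ν.withDensity fun x => ENNReal.ofReal (N * Real.exp (-‖x‖ ^ θ)))
    (A : Set E) (x : ι → E) {r : ℝ} (hr : 0 ≤ r) :
    P {ω | ∃ i, r / 2 ≤ infDist (x i) A ∧ infDist (x i + W i ω) A ≤ r / 4} ≤
      ENNReal.ofReal (((1 - (1 / 2) ^ θ) ^ (-θ⁻¹)) ^ Module.finrank ℝ E) *
        ∑' i, ENNReal.ofReal (Real.exp (-(minShift A r (x i) / 2) ^ θ)) := by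
  have hs : ∀ i, 0 ≤ minShift A r (x i) := fun i =>
    (div_four_le_minShift A r _).trans' (by linarith)
  have hhalf : (1 / 2 : ℝ) ^ θ < 1 := Real.rpow_lt_one (by norm_num) (by norm_num) hθ
  calc P _ ≤ P (⋃ i, W i ⁻¹' {v | minShift A r (x i) ≤ ‖v‖}) := by
        refine measure_mono fun ω ⟨i, hi, hiω⟩ => Set.mem_iUnion.2 ⟨i, ?_⟩
        exact minShift_le_norm hi hiω
    _ ≤ ∑' i, _ := measure_iUnion_preimage_le_tsum P hW hlaw fun i =>
        (isClosed_le continuous_const continuous_norm).measurableSet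
    _ ≤ _ := by
        rw [← ENNReal.tsum_mul_left]
        refine ENNReal.tsum_le_tsum fun i => ?_
        have := withDensity_exp_neg_rpow_norm_ge_le ν (N := N) hθ (by positivity) hhalf (hs i)
        rwa [← Real.mul_rpow (by norm_num) (hs i), one_div_mul_eq_div,
          ENNReal.ofReal_mul (pow_nonneg (Real.rpow_nonneg (by linarith) _) _)] at this

end Chernoff

theorem summable_exp_neg_mul_abs_rpow {c θ : ℝ} (hc : 0 < c) (hθ : 0 < θ) :
    Summable fun k : ℤ => Real.exp (-(c * |(k : ℝ)| ^ θ)) := by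
  have hatTop : (fun x : ℝ => Real.exp (-(c * x ^ θ))) =O[atTop] fun x => x ^ (-2 : ℝ) := by
    refine ((isLittleO_exp_neg_mul_rpow_atTop hc (-2 / θ)).comp_tendsto
      (tendsto_rpow_atTop hθ)).isBigO.congr' (by simp [Function.comp_def, neg_mul]) ?_
    filter_upwards [eventually_ge_atTop 0] with x hx
    rw [Function.comp_apply, ← Real.rpow_mul hx, mul_div_cancel₀ _ hθ.ne']
  exact summable_of_isBigO (Real.summable_abs_int_rpow one_lt_two)
    (hatTop.comp_tendsto (tendsto_norm_cocompact_atTop.comp Int.tendsto_coe_cofinite))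

theorem summable_prod_apply {ι α : Type*} [Fintype ι] [DecidableEq ι] [DecidableEq α]
    {g : α → ℝ} (hg₀ : 0 ≤ g) (hg : Summable g) :
    Summable fun p : ι → α => ∏ i, g (p i) := by
  refine summable_of_sum_le (c := ∏ _i : ι, ∑' a, g a)
    (fun p => Finset.prod_nonneg fun i _ => hg₀ _) fun s => ?_
  calc ∑ p ∈ s, ∏ i, g (p i)
      ≤ ∑ p ∈ Fintype.piFinset fun i => s.image (· i), ∏ i, g (p i) :=
        Finset.sum_le_sum_of_subset_of_nonneg
          (fun p hp => Fintype.mem_piFinset.2 fun i => Finset.mem_image_of_mem _ hp)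
          fun p _ _ => Finset.prod_nonneg fun i _ => hg₀ _
    _ = ∏ i, ∑ a ∈ s.image (· i), g a := (Finset.prod_univ_sum _ _).symm
    _ ≤ ∏ _i : ι, ∑' a, g a := Finset.prod_le_prod (fun i _ => Finset.sum_nonneg fun a _ => hg₀ a)
        fun i _ => hg.sum_le_tsum _ fun a _ => hg₀ a

/-- Since each `|p i| ≤ ‖p‖`, the summand is dominated by a product of one-dimensional ones. -/
theorem summable_exp_neg_mul_norm_latticePt_rpow {d : ℕ} (hd : 1 ≤ d) {δ θ : ℝ} (hδ : 0 < δ)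
    (hθ : 0 < θ) :
    Summable fun p => Real.exp (-(δ * ‖latticePt d p‖ ^ θ)) := by
  refine (summable_prod_apply (ι := Fin d) (fun k => Real.exp_nonneg _)
    (summable_exp_neg_mul_abs_rpow (c := δ / d) (by positivity) hθ)).of_nonneg_of_le
    (fun p => Real.exp_nonneg _) fun p => ?_
  rw [← Real.exp_sum, Finset.sum_neg_distrib]
  gcongr
  calc ∑ i, δ / d * |(p i : ℝ)| ^ θ ≤ ∑ _i : Fin d, δ / d * ‖latticePt d p‖ ^ θ := by
        gcongr with i
        exact PiLp.norm_apply_le (latticePt d p) i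
    _ = δ * ‖latticePt d p‖ ^ θ := by
        rw [Finset.sum_const, Finset.card_univ, Fintype.card_fin, nsmul_eq_mul]
        field_simp

theorem latticePt_sub (d : ℕ) (q m : Fin d → ℤ) :
    latticePt d q - latticePt d m = latticePt d (q - m) := by
  ext i
  simp [latticePt]

theorem norm_sub_latticePt_floor_le {d : ℕ} (a : EuclideanSpace ℝ (Fin d)) :
    ‖a - latticePt d fun i => ⌊a i⌋‖ ≤ √d := by
  rw [EuclideanSpace.norm_eq]
  gcongr
  calc ∑ i, ‖(a - latticePt d fun i => ⌊a i⌋) i‖ ^ 2 ≤ ∑ _i : Fin d, (1 : ℝ) := by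
        gcongr with i
        have h : ‖(a - latticePt d fun i => ⌊a i⌋) i‖ = Int.fract (a i) := by
          simp [latticePt, Int.self_sub_floor, abs_of_nonneg (Int.fract_nonneg (a i))]
        rw [h]
        nlinarith [Int.fract_nonneg (a i), Int.fract_lt_one (a i)]
    _ = d := by simp

theorem card_Icc_sub_const_add_const {d : ℕ} (m : Fin d → ℤ) {M : ℤ} (hM : 0 ≤ M) :
    ((Finset.Icc (m - fun _ => M) (m + fun _ => M)).card : ℝ) = (2 * M + 1) ^ d := by
  have h : ∀ i, ((m i + M + 1 - (m i - M)).toNat : ℝ) = 2 * M + 1 := fun i => by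
    rw [show m i + M + 1 - (m i - M) = 2 * M + 1 by ring]
    exact_mod_cast Int.toNat_of_nonneg (by omega)
  simp [Pi.card_Icc, h]

theorem lt_norm_latticePt_sub_of_notMem_Icc {d : ℕ} {q m : Fin d → ℤ} {M : ℤ}
    (h : q ∉ Finset.Icc (m - fun _ => M) (m + fun _ => M)) :
    (M : ℝ) < ‖latticePt d q - latticePt d m‖ := by
  contrapose! h
  have hcoord : ∀ i, |q i - m i| ≤ M := fun i => by
    have := (PiLp.norm_apply_le (latticePt d q - latticePt d m) i).trans h
    exact_mod_cast (by simpa [latticePt] using this : |(q i : ℝ) - m i| ≤ M)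
  simp only [Finset.mem_Icc, Pi.le_def, Pi.sub_apply, Pi.add_apply]
  exact ⟨fun i => by linarith [(abs_le.1 (hcoord i)).1],
    fun i => by linarith [(abs_le.1 (hcoord i)).2]⟩

theorem div_eight_rpow_add_le {θ r R s : ℝ} (hθ : 0 < θ) (hr : 0 ≤ r) (hrR : 2 * r ≤ R)
    (hRs : R / 4 ≤ s) :
    (r / 8) ^ θ + ((1 / 8) ^ θ - (1 / 16) ^ θ) * R ^ θ ≤ (s / 2) ^ θ := by
  have hR : 0 ≤ R := by linarith
  have h16 : (r / 8) ^ θ ≤ (1 / 16) ^ θ * R ^ θ := by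
    rw [← Real.mul_rpow (by norm_num) hR]
    exact Real.rpow_le_rpow (by positivity) (by linarith) hθ.le
  have h8 : (1 / 8) ^ θ * R ^ θ ≤ (s / 2) ^ θ := by
    rw [← Real.mul_rpow (by norm_num) hR]
    exact Real.rpow_le_rpow (by positivity) (by linarith) hθ.le
  linarith

theorem pow_mul_add_le_add_mul_pow_two_mul {c r x : ℝ} (hc : 0 ≤ c) (hr : 1 ≤ r) (hx : 0 ≤ x)
    (d : ℕ) : (c * r) ^ d + x ≤ (c ^ d + x) * r ^ (2 * d) := by
  rw [mul_pow, add_mul]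
  gcongr
  · omega
  · exact le_mul_of_one_le_right hx (one_le_pow₀ hr)

theorem ofReal_exp_neg_rpow_minShift_le {d : ℕ} {θ r : ℝ} (hθ : 0 < θ) (hr : 0 ≤ r)
    {A : Set (EuclideanSpace ℝ (Fin d))} {a : EuclideanSpace ℝ (Fin d)}
    (hA : Bornology.IsBounded A) (ha : a ∈ A) (hdiam : diam A ≤ r) {m : Fin d → ℤ}
    (ham : ‖a - latticePt d m‖ ≤ r / 4) (q : Fin d → ℤ) :
    ENNReal.ofReal (Real.exp (-(minShift A r (latticePt d q) / 2) ^ θ)) ≤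
      ENNReal.ofReal (Real.exp (-(r / 8) ^ θ)) *
        ((if q ∈ Finset.Icc (m - fun _ => ⌈2 * r⌉) (m + fun _ => ⌈2 * r⌉) then 1 else 0) +
          ENNReal.ofReal
            (Real.exp (-(((1 / 8) ^ θ - (1 / 16) ^ θ) * ‖latticePt d (q - m)‖ ^ θ)))) := by
  split_ifs with hq
  · have hs : r / 8 ≤ minShift A r (latticePt d q) / 2 := by
      linarith [div_four_le_minShift A r (latticePt d q)]
    rw [mul_add, mul_one]
    exact le_add_right (ENNReal.ofReal_le_ofReal (Real.exp_le_exp.2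
      (neg_le_neg (Real.rpow_le_rpow (by positivity) hs hθ.le))))
  · have hfar : 2 * r ≤ ‖latticePt d q - latticePt d m‖ :=
      (Int.le_ceil _).trans (lt_norm_latticePt_sub_of_notMem_Icc hq).le
    have := div_eight_rpow_add_le hθ hr hfar
      (div_four_le_minShift_of_two_mul_le hA ha hdiam ham hfar)
    rw [zero_add, ← ENNReal.ofReal_mul (Real.exp_nonneg _), ← Real.exp_add, ← latticePt_sub]
    exact ENNReal.ofReal_le_ofReal (Real.exp_le_exp.2 (by linarith))

theorem tsum_exp_neg_rpow_minShift_le {d : ℕ} (hd : 1 ≤ d) {θ r : ℝ} (hθ : 0 < θ)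
    {A : Set (EuclideanSpace ℝ (Fin d))} {a : EuclideanSpace ℝ (Fin d)}
    (hA : Bornology.IsBounded A) (ha : a ∈ A) (hdiam : diam A ≤ r) (hr : 4 * (√d + 1) ≤ r) :
    ∑' q, ENNReal.ofReal (Real.exp (-(minShift A r (latticePt d q) / 2) ^ θ)) ≤
      ENNReal.ofReal (Real.exp (-(r / 8) ^ θ) * ((7 * r) ^ d +
        ∑' p, Real.exp (-(((1 / 8) ^ θ - (1 / 16) ^ θ) * ‖latticePt d p‖ ^ θ)))) := by
  set m : Fin d → ℤ := fun i => ⌊a i⌋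
  set F := Finset.Icc (m - fun _ => ⌈2 * r⌉) (m + fun _ => ⌈2 * r⌉)
  set w : (Fin d → ℤ) → ℝ := fun p =>
    Real.exp (-(((1 / 8) ^ θ - (1 / 16) ^ θ) * ‖latticePt d p‖ ^ θ))
  have hw : Summable w := summable_exp_neg_mul_norm_latticePt_rpow hd (by
    linarith [Real.rpow_lt_rpow (by norm_num : (0 : ℝ) ≤ 1 / 16)
      (by norm_num : (1 / 16 : ℝ) < 1 / 8) hθ]) hθ
  have hsd := Real.sqrt_nonneg d
  have ham : ‖a - latticePt d m‖ ≤ r / 4 := (norm_sub_latticePt_floor_le a).trans (by linarith)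
  have hcard : (F.card : ℝ) ≤ (7 * r) ^ d := by
    rw [card_Icc_sub_const_add_const m (Int.ceil_nonneg (by linarith))]
    have := Int.le_ceil (2 * r)
    have := Int.ceil_lt_add_one (2 * r)
    exact pow_le_pow_left₀ (by linarith) (by linarith) d
  calc _ ≤ ∑' q, ENNReal.ofReal (Real.exp (-(r / 8) ^ θ)) *
          ((if q ∈ F then 1 else 0) + ENNReal.ofReal (w (q - m))) :=
        ENNReal.tsum_le_tsum (ofReal_exp_neg_rpow_minShift_le hθ (by linarith) hA ha hdiam ham)
    _ = ENNReal.ofReal (Real.exp (-(r / 8) ^ θ)) * ENNReal.ofReal (F.card + ∑' p, w p) := by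
        rw [ENNReal.tsum_mul_left, ENNReal.tsum_add, tsum_eq_sum fun q hq => if_neg hq,
          show ∑' q, ENNReal.ofReal (w (q - m)) = ∑' p, ENNReal.ofReal (w p) from
            (Equiv.subRight m).tsum_eq fun p => ENNReal.ofReal (w p),
          ENNReal.ofReal_add (by positivity) (tsum_nonneg fun p => Real.exp_nonneg _),
          ENNReal.ofReal_tsum_of_nonneg (fun p => Real.exp_nonneg _) hw]
        simp [w]
    _ ≤ _ := by
        rw [← ENNReal.ofReal_mul (Real.exp_nonneg _)]
        gcongr

theorem stmt11_general (d : ℕ) (hd : 1 ≤ d) (θ : ℝ) (hθ : 0 < θ) (N : ℝ)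
    (μ : Measure (EuclideanSpace ℝ (Fin d)))
    (hμ : μ = volume.withDensity (fun x => ENNReal.ofReal (N * Real.exp (-‖x‖ ^ θ))))
    (hμprob : IsProbabilityMeasure μ)
    {Ω : Type*} [MeasurableSpace Ω] (P : Measure Ω)
    (W : (Fin d → ℤ) → Ω → EuclideanSpace ℝ (Fin d))
    (hWmeas : ∀ q, Measurable (W q))
    (hlaw : ∀ q, Measure.map (W q) P = μ) :
    ∃ C : ℝ, 0 < C ∧ ∃ r₁ : ℝ, 0 < r₁ ∧
      ∀ r ≥ r₁, ∀ A : Set (EuclideanSpace ℝ (Fin d)), A.Nonempty →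
      EMetric.diam A < ENNReal.ofReal r →
      P {ω | ∃ q : Fin d → ℤ,
          r / 2 ≤ Metric.infDist (latticePt d q) A ∧
          Metric.infDist (latticePt d q + W q ω) A ≤ r / 4} ≤
        ENNReal.ofReal (C * r ^ (2 * d) * Real.exp (-(r / 8) ^ θ)) := by
  subst hμ
  set K : ℝ := ((1 - (1 / 2) ^ θ) ^ (-θ⁻¹)) ^ d
  set S := ∑' p, Real.exp (-(((1 / 8) ^ θ - (1 / 16) ^ θ) * ‖latticePt d p‖ ^ θ))
  have hK : 0 < K := pow_pos (Real.rpow_pos_of_pos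
    (by linarith [Real.rpow_lt_one (by norm_num : (0 : ℝ) ≤ 1 / 2) (by norm_num) hθ]) _) d
  have hS : 0 ≤ S := tsum_nonneg fun p => Real.exp_nonneg _
  refine ⟨K * (7 ^ d + S), by positivity, 4 * (√d + 1), by positivity, ?_⟩
  rintro r hr A ⟨a, ha⟩ hdiam
  have hr1 : 1 ≤ r := by linarith [Real.sqrt_nonneg d]
  have hA : Bornology.IsBounded A := isBounded_iff_ediam_ne_top.2 hdiam.ne_top
  have hdiam' : diam A ≤ r := ENNReal.toReal_le_of_le_ofReal (by linarith) hdiam.le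
  calc P _ ≤ ENNReal.ofReal K *
        ∑' q, ENNReal.ofReal (Real.exp (-(minShift A r (latticePt d q) / 2) ^ θ)) := by
        simpa only [finrank_euclideanSpace_fin] using
          measure_exists_infDist_add_le volume P hθ hWmeas hlaw A (latticePt d) (by linarith)
    _ ≤ ENNReal.ofReal K * ENNReal.ofReal (Real.exp (-(r / 8) ^ θ) * ((7 * r) ^ d + S)) := by
        gcongr
        exact tsum_exp_neg_rpow_minShift_le hd hθ hA ha hdiam' (by linarith)
    _ ≤ _ := by
        rw [← ENNReal.ofReal_mul hK.le]
        refine ENNReal.ofReal_le_ofReal ?_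
        have := pow_mul_add_le_add_mul_pow_two_mul (c := 7) (by norm_num) hr1 hS d
        calc _ ≤ K * (Real.exp (-(r / 8) ^ θ) * ((7 ^ d + S) * r ^ (2 * d))) := by gcongr
          _ = _ := by ring

/-- For perturbations with common law `μ` of density `N·exp(−‖x‖^θ)`, there are `C > 0` and
`r₁ > 0` such that for all `r ≥ r₁` and every nonempty set `A` of diameter `< r`, the
probability that some lattice point `q` with `dist(q, A) ≥ r/2` has
`dist(q + ω_q, A) ≤ r/4` is at most `C·r^{2d}·exp(−(r/8)^θ)`. -/
theorem stmt11 (d : ℕ) (hd : 1 ≤ d) (θ : ℝ) (hθ : 0 < θ) (N : ℝ) (hN : 0 < N)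
    (μ : Measure (EuclideanSpace ℝ (Fin d)))
    (hμ : μ = volume.withDensity (fun x => ENNReal.ofReal (N * Real.exp (-‖x‖ ^ θ))))
    (hμprob : IsProbabilityMeasure μ)
    {Ω : Type*} [MeasurableSpace Ω] (P : Measure Ω) [IsProbabilityMeasure P]
    (W : (Fin d → ℤ) → Ω → EuclideanSpace ℝ (Fin d))
    (hWmeas : ∀ q, Measurable (W q))
    (hlaw : ∀ q, Measure.map (W q) P = μ) :
    ∃ C : ℝ, 0 < C ∧ ∃ r₁ : ℝ, 0 < r₁ ∧
      ∀ r ≥ r₁, ∀ A : Set (EuclideanSpace ℝ (Fin d)), A.Nonempty →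
      EMetric.diam A < ENNReal.ofReal r →
      P {ω | ∃ q : Fin d → ℤ,
          r / 2 ≤ Metric.infDist (latticePt d q) A ∧
          Metric.infDist (latticePt d q + W q ω) A ≤ r / 4} ≤
        ENNReal.ofReal (C * r ^ (2 * d) * Real.exp (-(r / 8) ^ θ)) :=
  stmt11_general d hd θ hθ N μ hμ hμprob P W hWmeas hlaw
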